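/- arXiv:1312.3440 — 2 statements merged into one kernel-verified Lean document; each statement's English description precedes it below -/
import Mathlib

section
/- Let R be a commutative ring, l ≥ 2, and asr(R) ≤ l−1. Then for any columns u⁺, u⁻ ∈ R^l such that the concatenated column (u⁺, u⁻) ∈ R^{2l} is unimodular, there exists an alternating matrix a ∈ M(l,R) such that the column u⁺ + a·u⁻ ∈ R^l is unimodular. (This is Lemma 2.2 of the paper, with the 'antipersymmetric' condition relative to the secondary diagonal rewritten as alternation in the standard hyperbolic basis.) -/
open Matrix

/-- A vector is *unimodular* if its entries generate the unit ideal of `R`. -/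
def Unimodular (R : Type*) [CommRing R] {ι : Type*} (v : ι → R) : Prop :=
  Ideal.span (Set.range v) = ⊤

/-- `sr(R) ≤ k`: for every `m ≥ k`, every unimodular column of height `m + 1` is stable. -/
def SRleq (R : Type*) [CommRing R] (k : ℕ) : Prop :=
  ∀ m : ℕ, k ≤ m → ∀ a : Fin (m + 1) → R, Unimodular R a →
    ∃ b : Fin m → R,
      Unimodular R fun i : Fin m => a i.castSucc + b i * a (Fin.last m)

/-- `𝔏(a)`: the intersection of all maximal ideals containing every entry of `a`
(`⊤ = R` if there is no such maximal ideal). -/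
def Lideal (R : Type*) [CommRing R] {ι : Type*} (a : ι → R) : Ideal R :=
  sInf {I : Ideal R | I.IsMaximal ∧ ∀ i, a i ∈ I}

/-- `asr(R) ≤ k`: the absolute stable rank condition. -/
def ASRleq (R : Type*) [CommRing R] (k : ℕ) : Prop :=
  ∀ m : ℕ, k ≤ m → ∀ a : Fin (m + 1) → R,
    ∃ b : Fin m → R,
      Lideal R (fun i : Fin m => a i.castSucc + b i * a (Fin.last m)) = Lideal R a

/-- The set of elementary transvections `1 + t·E i j`, `i ≠ j`, viewed inside `GL`. -/
def ElemGen (R : Type*) [CommRing R] (ι : Type*) [Fintype ι] [DecidableEq ι] :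
    Set (Matrix ι ι R)ˣ :=
  {u | ∃ i j : ι, i ≠ j ∧ ∃ t : R, (u : Matrix ι ι R) = 1 + Matrix.single i j t}

/-- The elementary subgroup `E(ι, R) ≤ GL(ι, R)`. -/
def Esubgroup (R : Type*) [CommRing R] (ι : Type*) [Fintype ι] [DecidableEq ι] :
    Subgroup (Matrix ι ι R)ˣ :=
  Subgroup.closure (ElemGen R ι)

/-- Generators of `Ẽ(n, R)`: elementary transvections, mixed commutators `[a, g]` with
`a ∈ E(n,R)`, `g ∈ GL(n,R)`, and elements `(1 + xy)(1 + yx)⁻¹` with `y = diag(ξ,1,…,1)`. -/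
def EtildeGen (R : Type*) [CommRing R] (n : ℕ) : Set (Matrix (Fin n) (Fin n) R)ˣ :=
  ElemGen R (Fin n) ∪
  {w | ∃ a ∈ Esubgroup R (Fin n), ∃ g : (Matrix (Fin n) (Fin n) R)ˣ,
        w = a * g * a⁻¹ * g⁻¹} ∪
  {w | ∃ (ξ : R) (x : Matrix (Fin n) (Fin n) R) (p q : (Matrix (Fin n) (Fin n) R)ˣ),
        (p : Matrix (Fin n) (Fin n) R)
          = 1 + x * Matrix.diagonal (fun i : Fin n => if (i : ℕ) = 0 then ξ else 1) ∧
        (q : Matrix (Fin n) (Fin n) R)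
          = 1 + Matrix.diagonal (fun i : Fin n => if (i : ℕ) = 0 then ξ else 1) * x ∧
        w = p * q⁻¹}

/-- `Ẽ(n, R)`: the normal closure in `GL(n, R)` of the subgroup generated by `EtildeGen`. -/
def Etilde (R : Type*) [CommRing R] (n : ℕ) : Subgroup (Matrix (Fin n) (Fin n) R)ˣ :=
  Subgroup.normalClosure (EtildeGen R n)

/-- Stabilization `GL(n,R) → GL(n+1,R)`, `g ↦ diag(g, 1)`. -/
def stabGL (R : Type*) [CommRing R] {n : ℕ} (g : (Matrix (Fin n) (Fin n) R)ˣ) :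
    (Matrix (Fin (n + 1)) (Fin (n + 1)) R)ˣ where
  val := (fromBlocks g.val 0 0 (1 : Matrix (Fin 1) (Fin 1) R)).submatrix
      finSumFinEquiv.symm finSumFinEquiv.symm
  inv := (fromBlocks g.inv 0 0 (1 : Matrix (Fin 1) (Fin 1) R)).submatrix
      finSumFinEquiv.symm finSumFinEquiv.symm
  val_inv := by
    rw [Matrix.submatrix_mul_equiv, Matrix.fromBlocks_multiply]
    simp [g.val_inv]
  inv_val := by
    rw [Matrix.submatrix_mul_equiv, Matrix.fromBlocks_multiply]
    simp [g.inv_val]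

/-- Generators of the elementary symplectic group, with indices restricted to `S`. -/
def spGen (R : Type*) [CommRing R] {ι : Type*} [DecidableEq ι] (S : Set ι) :
    Set (Matrix (ι ⊕ ι) (ι ⊕ ι) R) :=
  {x | ∃ t : R,
    (∃ i ∈ S, x = 1 + Matrix.single (Sum.inl i) (Sum.inr i) t) ∨
    (∃ i ∈ S, x = 1 + Matrix.single (Sum.inr i) (Sum.inl i) t) ∨
    (∃ i ∈ S, ∃ j ∈ S, i ≠ j ∧
      x = 1 + (Matrix.single (Sum.inl i) (Sum.inl j) t
             - Matrix.single (Sum.inr j) (Sum.inr i) t)) ∨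
    (∃ i ∈ S, ∃ j ∈ S, i ≠ j ∧
      x = 1 + (Matrix.single (Sum.inl i) (Sum.inr j) t
             + Matrix.single (Sum.inl j) (Sum.inr i) t)) ∨
    (∃ i ∈ S, ∃ j ∈ S, i ≠ j ∧
      x = 1 + (Matrix.single (Sum.inr i) (Sum.inl j) t
             + Matrix.single (Sum.inr j) (Sum.inl i) t))}

/-- The elementary symplectic group `Ep` (with indices restricted to `S`),
as a subgroup of `GL(ι ⊕ ι, R)`. -/
def EpS (R : Type*) [CommRing R] (ι : Type*) [Fintype ι] [DecidableEq ι] (S : Set ι) :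
    Subgroup (Matrix (ι ⊕ ι) (ι ⊕ ι) R)ˣ :=
  Subgroup.closure
    {u : (Matrix (ι ⊕ ι) (ι ⊕ ι) R)ˣ | (u : Matrix (ι ⊕ ι) (ι ⊕ ι) R) ∈ spGen R S}

/-- The matrix `J = (0 I; -I 0)`. -/
def Jmat (R : Type*) [CommRing R] (ι : Type*) [DecidableEq ι] : Matrix (ι ⊕ ι) (ι ⊕ ι) R :=
  fromBlocks 0 1 (-1) 0

/-- `x` is symplectic: `xᵀ J x = J`. -/
def IsSymplectic (R : Type*) [CommRing R] {ι : Type*} [Fintype ι] [DecidableEq ι]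
    (x : Matrix (ι ⊕ ι) (ι ⊕ ι) R) : Prop :=
  xᵀ * Jmat R ι * x = Jmat R ι

/-- The hyperbolic embedding `H(g) = diag(g, (gᵀ)⁻¹)`. -/
def Hyp (R : Type*) [CommRing R] {ι : Type*} [Fintype ι] [DecidableEq ι]
    (g : (Matrix ι ι R)ˣ) : (Matrix (ι ⊕ ι) (ι ⊕ ι) R)ˣ where
  val := fromBlocks g.val 0 0 g.invᵀ
  inv := fromBlocks g.inv 0 0 g.valᵀ
  val_inv := by
    rw [Matrix.fromBlocks_multiply]
    simp [← Matrix.transpose_mul, g.val_inv, g.inv_val]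
  inv_val := by
    rw [Matrix.fromBlocks_multiply]
    simp [← Matrix.transpose_mul, g.val_inv, g.inv_val]

/-- `diag(1, g)` as an element of `GL(l + 1, R)`. -/
def diagOneGL (R : Type*) [CommRing R] {l : ℕ} (g : (Matrix (Fin l) (Fin l) R)ˣ) :
    (Matrix (Fin (l + 1)) (Fin (l + 1)) R)ˣ where
  val := (fromBlocks (1 : Matrix (Fin 1) (Fin 1) R) 0 0 g.val).submatrix
      (finSumFinEquiv.trans (finCongr (Nat.add_comm 1 l))).symm
      (finSumFinEquiv.trans (finCongr (Nat.add_comm 1 l))).symm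
  inv := (fromBlocks (1 : Matrix (Fin 1) (Fin 1) R) 0 0 g.inv).submatrix
      (finSumFinEquiv.trans (finCongr (Nat.add_comm 1 l))).symm
      (finSumFinEquiv.trans (finCongr (Nat.add_comm 1 l))).symm
  val_inv := by
    rw [Matrix.submatrix_mul_equiv, Matrix.fromBlocks_multiply]
    simp [g.val_inv]
    exact Matrix.submatrix_one_equiv (finSumFinEquiv.trans (finCongr (Nat.add_comm 1 l))).symm
  inv_val := by
    rw [Matrix.submatrix_mul_equiv, Matrix.fromBlocks_multiply]
    simp [g.inv_val]
    exact Matrix.submatrix_one_equiv (finSumFinEquiv.trans (finCongr (Nat.add_comm 1 l))).symm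

/-- `U(2l, R)`: symplectic matrices with zero lower-left block and
upper unitriangular upper-left block. -/
def Upos (R : Type*) [CommRing R] (l : ℕ) :
    Set (Matrix (Fin l ⊕ Fin l) (Fin l ⊕ Fin l) R) :=
  {x | IsSymplectic R x ∧ (∀ i j, x (Sum.inr i) (Sum.inl j) = 0) ∧
       (∀ i j : Fin l, j < i → x (Sum.inl i) (Sum.inl j) = 0) ∧
       (∀ i, x (Sum.inl i) (Sum.inl i) = 1)}

/-- `U⁻(2l, R)`: symplectic matrices with zero upper-right block and
lower unitriangular upper-left block. -/
def Uneg (R : Type*) [CommRing R] (l : ℕ) :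
    Set (Matrix (Fin l ⊕ Fin l) (Fin l ⊕ Fin l) R) :=
  {x | IsSymplectic R x ∧ (∀ i j, x (Sum.inl i) (Sum.inr j) = 0) ∧
       (∀ i j : Fin l, i < j → x (Sum.inl i) (Sum.inl j) = 0) ∧
       (∀ i, x (Sum.inl i) (Sum.inl i) = 1)}


section Statement4Proof

variable {R : Type*} [CommRing R]

private lemma mem_Lideal {ι : Type*} (a : ι → R) (i : ι) : a i ∈ Lideal R a := by
  unfold Lideal
  rw [Ideal.mem_sInf]
  intro J hJ
  exact hJ.2 i

private lemma asr_step {k : ℕ} (hasr : ASRleq R k) (m : ℕ) (hm : k ≤ m)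
    (A : Fin (m + 1) → R) :
    ∃ b : Fin m → R, ∀ I : Ideal R, I.IsMaximal →
      (∀ i : Fin m, A i.castSucc + b i * A (Fin.last m) ∈ I) → ∀ j, A j ∈ I := by
  obtain ⟨b, hb⟩ := hasr m hm A
  refine ⟨b, fun I hI hmem j => ?_⟩
  have h1 : Lideal R (fun i : Fin m => A i.castSucc + b i * A (Fin.last m)) ≤ I := by
    unfold Lideal
    exact sInf_le ⟨hI, hmem⟩
  have h2 : A j ∈ Lideal R A := mem_Lideal A j
  rw [← hb] at h2
  exact h1 h2

private lemma unimod_ne_all_max {ι : Type*} {v : ι → R} (h : Unimodular R v)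
    {I : Ideal R} (hI : I.IsMaximal) : ¬ ∀ i, v i ∈ I := by
  intro hall
  refine hI.ne_top (top_unique ?_)
  have hle : Ideal.span (Set.range v) ≤ I :=
    Ideal.span_le.2 (by rintro _ ⟨i, rfl⟩; exact hall i)
  have heq : Ideal.span (Set.range v) = ⊤ := h
  rw [heq] at hle
  exact hle

private lemma unimod_of_not_max {ι : Type*} {v : ι → R}
    (h : ∀ I : Ideal R, I.IsMaximal → ¬ ∀ i, v i ∈ I) : Unimodular R v := by
  by_contra hne
  obtain ⟨I, hI, hle⟩ := Ideal.exists_le_maximal _ hne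
  exact h I hI fun i => hle (Ideal.subset_span ⟨i, rfl⟩)

private lemma unimod_mulVec {ι : Type*} [Fintype ι] [DecidableEq ι]
    (M N : Matrix ι ι R) (hNM : N * M = 1) {x : ι → R} (hx : Unimodular R x) :
    Unimodular R (M.mulVec x) := by
  have key : ∀ i, x i ∈ Ideal.span (Set.range (M.mulVec x)) := by
    intro i
    have hxi : x i = ∑ k, N i k * (M.mulVec x) k := by
      have h1 : N.mulVec (M.mulVec x) = x := by
        rw [Matrix.mulVec_mulVec, hNM, Matrix.one_mulVec]
      conv_lhs => rw [← h1]
      rfl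
    rw [hxi]
    exact Ideal.sum_mem _ fun k _ =>
      Ideal.mul_mem_left _ _ (Ideal.subset_span ⟨k, rfl⟩)
  have hle : Ideal.span (Set.range x) ≤ Ideal.span (Set.range (M.mulVec x)) :=
    Ideal.span_le.2 (by rintro _ ⟨i, rfl⟩; exact key i)
  have heq : Ideal.span (Set.range x) = ⊤ := hx
  rw [heq] at hle
  exact top_unique hle

private lemma sum_antisymm_zero {ι : Type*} [Fintype ι] (f : ι → ι → R)
    (hskew : ∀ p q, f q p = - f p q) (hdiag : ∀ p, f p p = 0) :
    (∑ p, ∑ q, f p q) = 0 := by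
  classical
  rw [← Finset.sum_product']
  refine Finset.sum_involution (fun z _ => (z.2, z.1)) ?_ ?_ ?_ ?_
  · intro z _
    show f z.1 z.2 + f z.2 z.1 = 0
    rw [hskew z.2 z.1]
    ring
  · intro z _ hf hzz
    have h1 : z.1 = z.2 := (congrArg Prod.snd hzz)
    apply hf
    show f z.1 z.2 = 0
    rw [h1]
    exact hdiag z.2
  · intro z _; simp
  · intro z _; rfl

private lemma conj_diag_zero {ι : Type*} [Fintype ι] (g A : Matrix ι ι R)
    (hA : Aᵀ = -A) (hd : ∀ p, A p p = 0) (i : ι) : (gᵀ * A * g) i i = 0 := by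
  have hskew : ∀ p q, A q p = - A p q := by
    intro p q
    have h1 := congrFun (congrFun hA p) q
    simpa [Matrix.transpose_apply] using h1
  have hexp : (gᵀ * A * g) i i = ∑ q, ∑ p, g p i * A p q * g q i := by
    simp only [Matrix.mul_apply, Matrix.transpose_apply, Finset.sum_mul]
  rw [hexp, Finset.sum_comm]
  refine sum_antisymm_zero (fun p q => g p i * A p q * g q i) ?_ ?_
  · intro p q
    show g q i * A q p * g p i = -(g p i * A p q * g q i)
    rw [hskew p q]; ring
  · intro p
    show g p i * A p p * g p i = 0
    rw [hd p]; ring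

private lemma master {n : ℕ} (hasr : ASRleq R (n + 1)) :
    ∀ c : ℕ, c ≤ n + 2 → ∀ u v : Fin (n + 2) → R,
      Unimodular R (Sum.elim u v) →
      (∀ I : Ideal R, I.IsMaximal → (∀ i : Fin (n + 2), c ≤ (i : ℕ) → u i ∈ I) →
        (∀ j : Fin (n + 2), (j : ℕ) < c → v j ∈ I) → ∀ j, v j ∈ I) →
      ∃ a : Matrix (Fin (n + 2)) (Fin (n + 2)) R, aᵀ = -a ∧ (∀ i, a i i = 0) ∧
        Unimodular R (fun i => u i + a.mulVec v i) := by
  intro c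
  induction c with
  | zero =>
    intro _ u v huni hyp
    refine ⟨0, by simp, by simp, ?_⟩
    have hu : Unimodular R u := by
      refine unimod_of_not_max fun I hI hall => ?_
      have hv : ∀ j, v j ∈ I :=
        hyp I hI (fun i _ => hall i) (fun j hj => absurd hj (by omega))
      refine unimod_ne_all_max huni hI ?_
      rintro (i | j)
      · exact hall i
      · exact hv j
    simpa using hu
  | succ c ih =>
    intro hc u v huni hyp
    classical
    have hc' : c < n + 2 := by omega
    set c' : Fin (n + 2) := ⟨c, hc'⟩ with hc'def
    set A : Fin (n + 2) → R := fun k =>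
      if h : (k : ℕ) < c then v ⟨(k : ℕ), by omega⟩
      else if h2 : (k : ℕ) = n + 1 then v c'
      else u ⟨(k : ℕ) + 1, by omega⟩ with hA
    obtain ⟨b, hb⟩ := asr_step hasr (n + 1) le_rfl A
    set δ : Fin (n + 2) → R := fun j =>
      if h : (j : ℕ) < c then b ⟨(j : ℕ), by omega⟩ else 0 with hδ
    set β : Fin (n + 2) → R := fun i =>
      if h : c < (i : ℕ) then b ⟨(i : ℕ) - 1, by omega⟩ else 0 with hβ
    have hδc : δ c' = 0 := by simp [hδ, hc'def]
    have hβc : β c' = 0 := by simp [hβ, hc'def]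
    have hβδ : ∀ k, β k * δ k = 0 := by
      intro k
      by_cases hk : (k : ℕ) < c
      · have h0 : β k = 0 := by simp only [hβ]; rw [dif_neg (by omega)]
        rw [h0, zero_mul]
      · have h0 : δ k = 0 := by simp only [hδ]; rw [dif_neg (by omega)]
        rw [h0, mul_zero]
    set v' : Fin (n + 2) → R := fun j => v j + δ j * v c' with hv'
    set u' : Fin (n + 2) → R := fun i =>
      if (i : ℕ) = c then u i - (∑ k, δ k * u k) - (∑ k, β k * v k)
      else u i + β i * v c' with hu'
    have hv'c : v' c' = v c' := by simp only [hv']; rw [hδc]; ring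
    have hAlast : A (Fin.last (n + 1)) = v c' := by
      have h1 : ¬ ((Fin.last (n + 1) : ℕ) < c) := by
        simp only [Fin.val_last]; omega
      simp only [hA]
      rw [dif_neg h1]
      exact dif_pos rfl
    have hmodv : ∀ (k : Fin (n + 1)) (hk : (k : ℕ) < c),
        A k.castSucc + b k * A (Fin.last (n + 1)) = v' ⟨(k : ℕ), by omega⟩ := by
      intro k hk
      rw [hAlast]
      have h1 : A k.castSucc = v ⟨(k : ℕ), by omega⟩ := by
        simp only [hA]
        rw [dif_pos (show ((k.castSucc : Fin (n + 2)) : ℕ) < c from hk)]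
        exact congrArg v (Fin.ext rfl)
      rw [h1]
      simp only [hv']
      have h2 : δ (⟨(k : ℕ), by omega⟩ : Fin (n + 2)) = b k := by
        simp only [hδ]
        rw [dif_pos (show ((⟨(k : ℕ), by omega⟩ : Fin (n + 2)) : ℕ) < c from hk)]
      rw [h2]
    have hmodu : ∀ (k : Fin (n + 1)) (hk : c ≤ (k : ℕ)),
        A k.castSucc + b k * A (Fin.last (n + 1)) = u' ⟨(k : ℕ) + 1, by omega⟩ := by
      intro k hk
      rw [hAlast]
      have hkn : (k : ℕ) < n + 1 := k.isLt
      have h1 : A k.castSucc = u ⟨(k : ℕ) + 1, by omega⟩ := by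
        simp only [hA]
        rw [dif_neg (show ¬ (((k.castSucc : Fin (n + 2)) : ℕ) < c) by
              simp only [Fin.coe_castSucc]; omega),
          dif_neg (show ¬ (((k.castSucc : Fin (n + 2)) : ℕ) = n + 1) by
              simp only [Fin.coe_castSucc]; omega)]
        exact congrArg u (Fin.ext rfl)
      rw [h1]
      simp only [hu']
      have hne : ¬ (((⟨(k : ℕ) + 1, by omega⟩ : Fin (n + 2)) : ℕ) = c) := by
        simp only []; omega
      rw [if_neg hne]
      have h2 : β (⟨(k : ℕ) + 1, by omega⟩ : Fin (n + 2)) = b k := by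
        simp only [hβ]
        rw [dif_pos (show c < ((⟨(k : ℕ) + 1, by omega⟩ : Fin (n + 2)) : ℕ) by
              simp only []; omega)]
        congr 1
      rw [h2]
    have hyp' : ∀ I : Ideal R, I.IsMaximal →
        (∀ i : Fin (n + 2), c ≤ (i : ℕ) → u' i ∈ I) →
        (∀ j : Fin (n + 2), (j : ℕ) < c → v' j ∈ I) → ∀ j, v' j ∈ I := by
      intro I hI hu'I hv'I
      have hall : ∀ j, A j ∈ I := by
        refine hb I hI ?_
        intro k
        by_cases hk : (k : ℕ) < c
        · rw [hmodv k hk]; exact hv'I _ hk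
        · rw [hmodu k (by omega)]
          exact hu'I _ (by simp; omega)
      have hvc : v c' ∈ I := by rw [← hAlast]; exact hall _
      have hvj : ∀ j : Fin (n + 2), (j : ℕ) < c → v j ∈ I := by
        intro j hj
        have h1 := hall ⟨(j : ℕ), by omega⟩
        rw [hA] at h1
        simp only [hj, dif_pos] at h1
        convert h1 using 2
      have huj : ∀ i : Fin (n + 2), c + 1 ≤ (i : ℕ) → u i ∈ I := by
        intro i hi
        have h1 := hall ⟨(i : ℕ) - 1, by omega⟩
        simp only [hA, Fin.val_mk] at h1
        rw [dif_neg (show ¬ ((i : ℕ) - 1 < c) by omega),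
          dif_neg (show ¬ ((i : ℕ) - 1 = n + 1) by have := i.isLt; omega)] at h1
        convert h1 using 2
        exact Fin.ext (by simp only [Fin.val_mk]; omega)
      have hvall : ∀ j, v j ∈ I := by
        refine hyp I hI huj ?_
        intro j hj
        rcases Nat.lt_succ_iff_lt_or_eq.1 hj with h | h
        · exact hvj j h
        · have hjc : j = c' := Fin.ext h
          rw [hjc]; exact hvc
      intro j
      exact add_mem (hvall j) (Ideal.mul_mem_left _ _ (hvall c'))
    have huni' : Unimodular R (Sum.elim u' v') := by
      set S := Ideal.span (Set.range (Sum.elim u' v')) with hS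
      have hmemu' : ∀ i, u' i ∈ S := fun i => Ideal.subset_span ⟨Sum.inl i, rfl⟩
      have hmemv' : ∀ j, v' j ∈ S := fun j => Ideal.subset_span ⟨Sum.inr j, rfl⟩
      have hvcS : v c' ∈ S := by rw [← hv'c]; exact hmemv' c'
      have hvS : ∀ j, v j ∈ S := by
        intro j
        have h1 : v j = v' j - δ j * v c' := by rw [hv']; ring
        rw [h1]
        exact sub_mem (hmemv' j) (Ideal.mul_mem_left _ _ hvcS)
      have huSne : ∀ i : Fin (n + 2), ¬ ((i : ℕ) = c) → u i ∈ S := by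
        intro i hi
        have h1 : u i = u' i - β i * v c' := by
          simp only [hu']; rw [if_neg hi]; ring
        rw [h1]
        exact sub_mem (hmemu' i) (Ideal.mul_mem_left _ _ hvcS)
      have hsum1 : (∑ k, δ k * u k) ∈ S := by
        refine Ideal.sum_mem _ fun k _ => ?_
        by_cases hk : (k : ℕ) < c
        · exact Ideal.mul_mem_left _ _ (huSne k (by omega))
        · have h0 : δ k = 0 := by simp only [hδ]; rw [dif_neg (by omega)]
          rw [h0, zero_mul]; exact zero_mem _
      have hsum2 : (∑ k, β k * v k) ∈ S :=
        Ideal.sum_mem _ fun k _ => Ideal.mul_mem_left _ _ (hvS k)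
      have huS : ∀ i, u i ∈ S := by
        intro i
        by_cases hi : (i : ℕ) = c
        · have h1 : u i = u' i + (∑ k, δ k * u k) + (∑ k, β k * v k) := by
            simp only [hu']; rw [if_pos hi]; ring
          rw [h1]
          exact add_mem (add_mem (hmemu' i) hsum1) hsum2
        · exact huSne i hi
      have hle : Ideal.span (Set.range (Sum.elim u v)) ≤ S := by
        refine Ideal.span_le.2 ?_
        rintro _ ⟨(i | j), rfl⟩
        · exact huS i
        · exact hvS j
      have heq : Ideal.span (Set.range (Sum.elim u v)) = ⊤ := huni
      rw [heq] at hle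
      exact top_unique hle
    obtain ⟨a', ha't, ha'd, ha'uni⟩ := ih (by omega) u' v' huni' hyp'
    set D : Matrix (Fin (n + 2)) (Fin (n + 2)) R :=
      Matrix.of (fun p q => if q = c' then δ p else 0) with hD
    set g : Matrix (Fin (n + 2)) (Fin (n + 2)) R := 1 + D with hg
    set hm : Matrix (Fin (n + 2)) (Fin (n + 2)) R := 1 - D with hhm
    set a₀ : Matrix (Fin (n + 2)) (Fin (n + 2)) R :=
      Matrix.of (fun p q => (if q = c' then β p else 0) - (if p = c' then β q else 0)) with ha₀
    have hDD : D * D = 0 := by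
      ext p q
      rw [Matrix.mul_apply]
      have hterm : ∀ k, D p k * D k q = if k = c' then δ p * D c' q else 0 := by
        intro k
        by_cases hk : k = c'
        · rw [hk, hD]; simp
        · rw [hD]; simp [hk]
      rw [Finset.sum_congr rfl fun k _ => hterm k, Finset.sum_ite_eq' Finset.univ c']
      have hDcq : D c' q = if q = c' then δ c' else 0 := by rw [hD]; simp
      simp [hDcq, hδc]
    have hgh : g * hm = 1 := by
      have hexp : (1 + D) * (1 - D) = 1 - D * D := by noncomm_ring
      rw [hg, hhm, hexp, hDD, sub_zero]
    have hhg : hm * g = 1 := by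
      have hexp : (1 - D) * (1 + D) = 1 - D * D := by noncomm_ring
      rw [hg, hhm, hexp, hDD, sub_zero]
    have hv'g : v' = g.mulVec v := by
      funext j
      rw [hg, Matrix.add_mulVec, Matrix.one_mulVec]
      show v' j = v j + D.mulVec v j
      have hDv : D.mulVec v j = δ j * v c' := by
        rw [Matrix.mulVec]
        show (∑ k, D j k * v k) = δ j * v c'
        have hterm : ∀ k, D j k * v k = if k = c' then δ j * v k else 0 := by
          intro k
          by_cases hk : k = c'
          · rw [hk, hD]; simp
          · rw [hD]; simp [hk]
        rw [Finset.sum_congr rfl fun k _ => hterm k, Finset.sum_ite_eq' Finset.univ c']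
        simp
      rw [hDv, hv']
    have hu'g : u' = hmᵀ.mulVec u + a₀.mulVec v' := by
      funext i
      have hDt : hmᵀ.mulVec u i = u i - (if i = c' then ∑ k, δ k * u k else 0) := by
        rw [hhm, Matrix.transpose_sub, Matrix.transpose_one, Matrix.sub_mulVec,
          Matrix.one_mulVec]
        show u i - Dᵀ.mulVec u i = _
        congr 1
        rw [Matrix.mulVec]
        show (∑ k, D k i * u k) = _
        have hterm : ∀ k, D k i * u k = if i = c' then δ k * u k else 0 := by
          intro k
          by_cases hk : i = c'
          · rw [hk, hD]; simp
          · rw [hD]; simp [hk]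
        rw [Finset.sum_congr rfl fun k _ => hterm k]
        by_cases hi : i = c' <;> simp [hi]
      have hβv' : ∀ k, β k * v' k = β k * v k := by
        intro k
        simp only [hv']
        rw [mul_add, ← mul_assoc, hβδ k, zero_mul, add_zero]
      have ha₀v : a₀.mulVec v' i
          = β i * v c' - (if i = c' then ∑ k, β k * v k else 0) := by
        have hterm : ∀ k, a₀ i k * v' k
            = (if k = c' then β i * v c' else 0) - (if i = c' then β k * v k else 0) := by
          intro k
          simp only [ha₀, Matrix.of_apply]
          by_cases hk : k = c'
          · subst hk
            by_cases hi : i = c'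
            · subst hi; simp
            · simp [hi, hv'c]
          · by_cases hi : i = c'
            · simp only [if_neg hk, if_pos hi]
              rw [← hβv' k]
              ring
            · simp [hk, hi]
        rw [Matrix.mulVec]
        show (∑ k, a₀ i k * v' k) = _
        rw [Finset.sum_congr rfl fun k _ => hterm k, Finset.sum_sub_distrib,
          Finset.sum_ite_eq' Finset.univ c' (fun _ => β i * v c'),
          if_pos (Finset.mem_univ c')]
        congr 1
        by_cases hi : i = c'
        · rw [if_pos hi]
          exact Finset.sum_congr rfl fun k _ => by rw [if_pos hi]
        · rw [if_neg hi]
          exact Finset.sum_eq_zero fun k _ => by rw [if_neg hi]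
      rw [Pi.add_apply, hDt, ha₀v]
      simp only [hu']
      by_cases hi : i = c'
      · rw [if_pos (show (i : ℕ) = c by rw [hi]), if_pos hi, if_pos hi]
        rw [hi, hβc]
        ring
      · rw [if_neg (show ¬ ((i : ℕ) = c) from fun hh => hi (Fin.ext hh)), if_neg hi, if_neg hi]
        ring
    set a : Matrix (Fin (n + 2)) (Fin (n + 2)) R := gᵀ * (a₀ + a') * g with ha
    have ha₀t : a₀ᵀ = -a₀ := by
      ext p q
      simp only [Matrix.transpose_apply, Matrix.neg_apply, ha₀, Matrix.of_apply]
      ring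
    have ha₀d : ∀ p, a₀ p p = 0 := by
      intro p
      simp only [ha₀, Matrix.of_apply]
      ring
    have hsum_t : (a₀ + a')ᵀ = -(a₀ + a') := by
      rw [Matrix.transpose_add, ha₀t, ha't, neg_add]
    have hsum_d : ∀ p, (a₀ + a') p p = 0 := by
      intro p
      rw [Matrix.add_apply, ha₀d p, ha'd p, add_zero]
    have hat : aᵀ = -a := by
      rw [ha, Matrix.transpose_mul, Matrix.transpose_mul, Matrix.transpose_transpose, hsum_t]
      rw [Matrix.neg_mul, Matrix.mul_neg, Matrix.mul_assoc]
    have had : ∀ i, a i i = 0 := fun i => conj_diag_zero g (a₀ + a') hsum_t hsum_d i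
    have hgT1 : gᵀ * hmᵀ = 1 := by
      rw [← Matrix.transpose_mul, hhg, Matrix.transpose_one]
    have hhT1 : hmᵀ * gᵀ = 1 := by
      rw [← Matrix.transpose_mul, hgh, Matrix.transpose_one]
    have hmat : a = gᵀ * (a₀ * g) + gᵀ * (a' * g) := by
      rw [ha]; noncomm_ring
    have hweq : u + a.mulVec v = gᵀ.mulVec (u' + a'.mulVec v') := by
      rw [hu'g, hv'g]
      simp only [Matrix.mulVec_add, Matrix.mulVec_mulVec]
      rw [hgT1, Matrix.one_mulVec, hmat, Matrix.add_mulVec]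
      abel
    refine ⟨a, hat, had, ?_⟩
    show Unimodular R (u + a.mulVec v)
    rw [hweq]
    exact unimod_mulVec gᵀ hmᵀ hhT1 (x := u' + a'.mulVec v') ha'uni

end Statement4Proof

/-- Lemma 2.2. Let `l ≥ 2` and `asr(R) ≤ l - 1`. For all columns
`u⁺, u⁻ ∈ R^l` whose concatenation is unimodular there is an alternating matrix `a`
with `u⁺ + a·u⁻` unimodular. -/
theorem statement4 (R : Type*) [CommRing R] (l : ℕ) (hl : 2 ≤ l) (hasr : ASRleq R (l - 1))
    (uplus uminus : Fin l → R)
    (huni : Unimodular R (Sum.elim uplus uminus : Fin l ⊕ Fin l → R)) :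
    ∃ a : Matrix (Fin l) (Fin l) R, aᵀ = -a ∧ (∀ i, a i i = 0) ∧
      Unimodular R fun i => uplus i + a.mulVec uminus i := by
  obtain ⟨n, rfl⟩ : ∃ n, l = n + 2 := ⟨l - 2, by omega⟩
  have hasr' : ASRleq R (n + 1) := hasr
  exact master hasr' (n + 2) le_rfl uplus uminus huni (fun I _ _ h j => h j j.isLt)
end

section
/- Let R be a commutative ring, l ≥ 3, and sr(R) ≤ l−1. Then Ep(2l,R) = U(2l,R) · U⁻(2l,R) · H(E(l,R)) · {q ∈ Ep(2l,R) : q·e₁ = e₁}; that is, every g ∈ Ep(2l,R) can be written as g = u·v·H(h)·q with u ∈ U(2l,R), v ∈ U⁻(2l,R), h ∈ E(l,R), and q ∈ Ep(2l,R) fixing the first standard basis vector e₁. (This is the image in the symplectic group of the Dennis–Vaserstein type factorization of Proposition 3.1, case Φ = C_l.) -/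
open Matrix

section Helpers
variable {R : Type*} [CommRing R]

lemma unimodular_iff {ι : Type*} [Fintype ι] (v : ι → R) :
    Unimodular R v ↔ ∃ x : ι → R, ∑ i, x i * v i = 1 := by
  unfold Unimodular
  rw [Ideal.eq_top_iff_one]
  constructor
  · intro h
    obtain ⟨c, hc⟩ := (Submodule.mem_span_range_iff_exists_fun R).mp h
    exact ⟨c, by simpa [smul_eq_mul] using hc⟩
  · rintro ⟨x, hx⟩
    exact (Submodule.mem_span_range_iff_exists_fun R).mpr ⟨x, by simpa [smul_eq_mul] using hx⟩

def nilUnit {A : Type*} [Ring A] (a : A) (h : a * a = 0) : Aˣ where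
  val := 1 + a
  inv := 1 - a
  val_inv := by
    have : (1 + a) * (1 - a) = 1 + (a * a) * (-1) := by noncomm_ring
    rw [this, h]; simp
  inv_val := by
    have : (1 - a) * (1 + a) = 1 + (a * a) * (-1) := by noncomm_ring
    rw [this, h]; simp

@[simp] lemma nilUnit_val {A : Type*} [Ring A] (a : A) (h : a * a = 0) :
    (nilUnit a h : A) = 1 + a := rfl

lemma exists_unit_one_add_sum {A : Type*} [Ring A] (G : Subgroup Aˣ)
    {ι : Type*} [DecidableEq ι] (s : Finset ι) (f : ι → A)
    (h0 : ∀ i ∈ s, ∀ j ∈ s, f i * f j = 0)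
    (hg : ∀ i ∈ s, ∃ u ∈ G, (u : A) = 1 + f i) :
    ∃ u ∈ G, (u : A) = 1 + ∑ i ∈ s, f i := by
  induction s using Finset.induction_on with
  | empty => exact ⟨1, G.one_mem, by simp⟩
  | insert a s ha ih =>
    obtain ⟨us, hus, hvs⟩ := ih (fun i hi j hj => h0 i (Finset.mem_insert_of_mem hi) j
      (Finset.mem_insert_of_mem hj)) (fun i hi => hg i (Finset.mem_insert_of_mem hi))
    obtain ⟨ua, hua, hva⟩ := hg a (Finset.mem_insert_self a s)
    refine ⟨ua * us, G.mul_mem hua hus, ?_⟩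
    push_cast
    rw [hva, hvs, Finset.sum_insert ha]
    have : f a * ∑ i ∈ s, f i = 0 := by
      rw [Finset.mul_sum]
      exact Finset.sum_eq_zero fun i hi => h0 a (Finset.mem_insert_self a s) i
        (Finset.mem_insert_of_mem hi)
    rw [mul_add, mul_one, add_mul, one_mul, this]
    abel

lemma sum_mulVec {ι n : Type*} [Fintype n] (s : Finset ι)
    (f : ι → Matrix n n R) (v : n → R) :
    (∑ i ∈ s, f i) *ᵥ v = ∑ i ∈ s, f i *ᵥ v := by
  induction s using Finset.cons_induction with
  | empty => simp [Matrix.zero_mulVec]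
  | cons a s ha ih => simp [Finset.sum_cons, Matrix.add_mulVec, ih]

/-- Row operation of the first kind: add `t r` times entry `k` to each entry `r`. -/
lemma exists_rowOp {n : ℕ} (k : Fin n) (t : Fin n → R) (ht : t k = 0) :
    ∃ g ∈ Esubgroup R (Fin n), ∀ v : Fin n → R,
      (g : Matrix (Fin n) (Fin n) R).mulVec v = fun r => v r + t r * v k := by
  have h0 : ∀ i ∈ (Finset.univ : Finset (Fin n)), ∀ j ∈ (Finset.univ : Finset (Fin n)),
      (Matrix.single i k (t i) : Matrix (Fin n) (Fin n) R)
        * Matrix.single j k (t j) = 0 := by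
    intro i _ j _
    rcases eq_or_ne k j with rfl | h
    · rw [ht]; simp
    · exact Matrix.single_mul_single_of_ne (t i) i k _ h (t j)
  have hmem : ∀ i ∈ (Finset.univ : Finset (Fin n)),
      ∃ u ∈ Esubgroup R (Fin n),
        (u : Matrix (Fin n) (Fin n) R) = 1 + Matrix.single i k (t i) := by
    intro i _
    rcases eq_or_ne i k with rfl | h
    · exact ⟨1, (Esubgroup R (Fin n)).one_mem, by simp [ht]⟩
    · exact ⟨nilUnit _ (Matrix.single_mul_single_of_ne (t i) i k _ (Ne.symm h) (t i)),
        Subgroup.subset_closure ⟨i, k, h, t i, rfl⟩, rfl⟩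
  obtain ⟨g, hg, hval⟩ := exists_unit_one_add_sum (Esubgroup R (Fin n)) Finset.univ
      (fun i => Matrix.single i k (t i)) h0 hmem
  refine ⟨g, hg, fun v => ?_⟩
  rw [hval, Matrix.add_mulVec, Matrix.one_mulVec, _root_.sum_mulVec]
  funext r
  simp only [Pi.add_apply, Matrix.single_mulVec, Finset.sum_apply,
    Function.update_apply, Pi.zero_apply]
  rw [Finset.sum_ite_eq]
  simp

/-- Row operation of the second kind: add `∑ i, t i * v i` to entry `k`. -/
lemma exists_rowOp' {n : ℕ} (k : Fin n) (t : Fin n → R) (ht : t k = 0) :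
    ∃ g ∈ Esubgroup R (Fin n), ∀ v : Fin n → R,
      (g : Matrix (Fin n) (Fin n) R).mulVec v
        = Function.update v k (v k + ∑ i, t i * v i) := by
  have h0 : ∀ i ∈ (Finset.univ : Finset (Fin n)), ∀ j ∈ (Finset.univ : Finset (Fin n)),
      (Matrix.single k i (t i) : Matrix (Fin n) (Fin n) R)
        * Matrix.single k j (t j) = 0 := by
    intro i _ j _
    rcases eq_or_ne i k with rfl | h
    · rw [ht]; simp
    · exact Matrix.single_mul_single_of_ne (t i) k i _ h (t j)
  have hmem : ∀ i ∈ (Finset.univ : Finset (Fin n)),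
      ∃ u ∈ Esubgroup R (Fin n),
        (u : Matrix (Fin n) (Fin n) R) = 1 + Matrix.single k i (t i) := by
    intro i _
    rcases eq_or_ne k i with rfl | h
    · exact ⟨1, (Esubgroup R (Fin n)).one_mem, by simp [ht]⟩
    · exact ⟨nilUnit _ (Matrix.single_mul_single_of_ne (t i) k i _ (Ne.symm h) (t i)),
        Subgroup.subset_closure ⟨k, i, h, t i, rfl⟩, rfl⟩
  obtain ⟨g, hg, hval⟩ := exists_unit_one_add_sum (Esubgroup R (Fin n)) Finset.univ
      (fun i => Matrix.single k i (t i)) h0 hmem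
  refine ⟨g, hg, fun v => ?_⟩
  rw [hval, Matrix.add_mulVec, Matrix.one_mulVec, _root_.sum_mulVec]
  funext r
  simp only [Pi.add_apply, Matrix.single_mulVec, Finset.sum_apply,
    Function.update_apply, Pi.zero_apply]
  split_ifs with h
  · subst h; simp
  · simp


lemma exists_E_col {m : ℕ} (hm : 2 ≤ m) (hsr : SRleq R m) (w : Fin (m+1) → R)
    (hw : Unimodular R w) :
    ∃ h ∈ Esubgroup R (Fin (m+1)),
      (h : Matrix (Fin (m+1)) (Fin (m+1)) R).mulVec (Pi.single 0 1) = w := by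
  classical
  set L : Fin (m+1) := Fin.last m with hLdef
  have hL0 : (0 : Fin (m+1)) ≠ L := by
    rw [hLdef]
    intro hc
    have := congrArg Fin.val hc
    simp [Fin.last] at this
    omega
  obtain ⟨b, hb⟩ := hsr m le_rfl w hw
  obtain ⟨x, hx⟩ := (unimodular_iff _).mp hb
  -- step 1
  obtain ⟨g₁, hg₁, hv₁⟩ := exists_rowOp (R := R) L
      (fun r => if hr : r = L then 0 else b (r.castPred hr)) (by simp)
  set w₁ : Fin (m+1) → R :=
    fun r => w r + (if hr : r = L then 0 else b (r.castPred hr)) * w L with hw₁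
  have hcsL : ∀ i : Fin m, (i.castSucc : Fin (m+1)) ≠ L := fun i => (Fin.castSucc_lt_last i).ne
  have hw₁c : ∀ i : Fin m, w₁ i.castSucc = w i.castSucc + b i * w L := by
    intro i
    simp [hw₁, hcsL i]
  have hw₁L : w₁ L = w L := by simp [hw₁]
  -- step 2
  obtain ⟨g₂, hg₂, hv₂⟩ := exists_rowOp' (R := R) L
      (fun r => if hr : r = L then 0 else (1 - w L) * x (r.castPred hr)) (by simp)
  set w₂ : Fin (m+1) → R := Function.update w₁ L
      (w₁ L + ∑ i, (if hr : i = L then 0 else (1 - w L) * x (i.castPred hr)) * w₁ i) with hw₂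
  have hw₂c : ∀ i : Fin m, w₂ i.castSucc = w i.castSucc + b i * w L := by
    intro i
    rw [hw₂, Function.update_apply, if_neg (hcsL i)]
    exact hw₁c i
  have hw₂L : w₂ L = 1 := by
    have hx' : ∑ i : Fin m, x i * (w i.castSucc + b i * w L) = 1 := hx
    have hsum : (∑ i : Fin (m+1),
        (if hr : i = L then 0 else (1 - w L) * x (i.castPred hr)) * w₁ i)
        = (1 - w L) * ∑ i : Fin m, x i * (w i.castSucc + b i * w L) := by
      rw [Fin.sum_univ_castSucc, Finset.mul_sum]
      have hlast : (if hr : (Fin.last m : Fin (m+1)) = L then 0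
          else (1 - w L) * x ((Fin.last m).castPred hr)) * w₁ (Fin.last m) = 0 := by
        rw [dif_pos rfl, zero_mul]
      rw [hlast, add_zero]
      refine Finset.sum_congr rfl fun i _ => ?_
      rw [dif_neg (hcsL i), hw₁c i, Fin.castPred_castSucc]
      ring
    rw [hw₂, Function.update_self, hsum, hx', hw₁L]
    ring
  -- step 3
  obtain ⟨g₃, hg₃, hv₃⟩ := exists_rowOp (R := R) L
      (fun r => if r = L then 0 else (if r = 0 then 1 else 0) - w₂ r) (by simp)
  set w₃ : Fin (m+1) → R :=
    fun r => w₂ r + (if r = L then 0 else (if r = 0 then 1 else 0) - w₂ r) * w₂ L with hw₃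
  have hw₃e : ∀ r, w₃ r = if r = L then 1 else (if r = 0 then 1 else 0) := by
    intro r
    rcases eq_or_ne r L with rfl | h
    · simp [hw₃, hw₂L]
    · show w₂ r + (if r = L then 0 else (if r = 0 then 1 else 0) - w₂ r) * w₂ L
        = if r = L then 1 else (if r = 0 then 1 else 0)
      rw [if_neg h, if_neg h, hw₂L, mul_one]
      ring
  -- step 4
  obtain ⟨g₄, hg₄, hv₄⟩ := exists_rowOp' (R := R) L
      (fun r => if r = 0 then -1 else 0) (by simp [Ne.symm hL0]) 
  set w₄ : Fin (m+1) → R := Function.update w₃ L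
      (w₃ L + ∑ i, (if i = 0 then (-1 : R) else 0) * w₃ i) with hw₄
  have hw₄e : w₄ = Pi.single 0 1 := by
    funext r
    rw [hw₄, Function.update_apply]
    rcases eq_or_ne r L with rfl | h
    · rw [if_pos rfl]
      have hsum : ∑ i, (if i = 0 then (-1 : R) else 0) * w₃ i = - w₃ 0 := by
        rw [Finset.sum_eq_single 0]
        · simp
        · intro i _ hi; simp [hi]
        · simp
      rw [hsum, hw₃e, hw₃e]
      simp [hL0, Ne.symm hL0]
    · rw [if_neg h, hw₃e, if_neg h, Pi.single_apply]
  -- combine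
  set G := g₄ * g₃ * g₂ * g₁ with hG
  have hGmem : G ∈ Esubgroup R (Fin (m+1)) :=
    Subgroup.mul_mem _ (Subgroup.mul_mem _ (Subgroup.mul_mem _ hg₄ hg₃) hg₂) hg₁
  have hGw : (G : Matrix (Fin (m+1)) (Fin (m+1)) R).mulVec w = Pi.single 0 1 := by
    rw [hG, Units.val_mul, Units.val_mul, Units.val_mul,
      ← Matrix.mulVec_mulVec, ← Matrix.mulVec_mulVec, ← Matrix.mulVec_mulVec,
      hv₁, hv₂, hv₃, hv₄]
    exact hw₄e
  refine ⟨G⁻¹, Subgroup.inv_mem _ hGmem, ?_⟩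
  rw [← hGw, Matrix.mulVec_mulVec, Units.inv_mul, Matrix.one_mulVec]

end Helpers

section SympHelpers

open Matrix

variable {R : Type*} [CommRing R] {n : ℕ}

lemma inlr_mul_zero (a b c d : Fin n) (s t : R) :
    (Matrix.single (Sum.inl a) (Sum.inr b) s :
        Matrix (Fin n ⊕ Fin n) (Fin n ⊕ Fin n) R) *
      Matrix.single (Sum.inl c) (Sum.inr d) t = 0 :=
  Matrix.single_mul_single_of_ne _ _ _ _ (by simp) _

lemma inrl_mul_zero (a b c d : Fin n) (s t : R) :
    (Matrix.single (Sum.inr a) (Sum.inl b) s :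
        Matrix (Fin n ⊕ Fin n) (Fin n ⊕ Fin n) R) *
      Matrix.single (Sum.inr c) (Sum.inl d) t = 0 :=
  Matrix.single_mul_single_of_ne _ _ _ _ (by simp) _

lemma fromBlocks_upper (S : Matrix (Fin n) (Fin n) R) :
    Matrix.fromBlocks (1 : Matrix (Fin n) (Fin n) R) S 0 1
      = 1 + Matrix.fromBlocks (0 : Matrix (Fin n) (Fin n) R) S
          (0 : Matrix (Fin n) (Fin n) R) (0 : Matrix (Fin n) (Fin n) R) := by
  ext k l
  rcases k with a | a <;> rcases l with b | b <;>
    simp [Matrix.one_apply]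

lemma fromBlocks_lower (Q : Matrix (Fin n) (Fin n) R) :
    Matrix.fromBlocks (1 : Matrix (Fin n) (Fin n) R) 0 Q 1
      = 1 + Matrix.fromBlocks (0 : Matrix (Fin n) (Fin n) R) (0 : Matrix (Fin n) (Fin n) R)
          Q (0 : Matrix (Fin n) (Fin n) R) := by
  ext k l
  rcases k with a | a <;> rcases l with b | b <;>
    simp [Matrix.one_apply]


lemma fentry_diag (S : Matrix (Fin n) (Fin n) R) (p1 a b : Fin n) :
    (Matrix.single (Sum.inl p1) (Sum.inr p1) (S p1 p1) :
       Matrix (Fin n ⊕ Fin n) (Fin n ⊕ Fin n) R) (Sum.inl a) (Sum.inr b)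
        = (if (p1, p1) = (a, b) then S a b else 0)
          + (if (p1, p1) = (b, a) then (if b = a then 0 else S b a) else 0) := by
  simp only [Matrix.single, Matrix.of_apply, Sum.inl.injEq, Sum.inr.injEq,
    Prod.mk.injEq]
  by_cases h1 : p1 = a <;> by_cases h2 : p1 = b <;> simp [h1, h2] <;>
    (rcases eq_or_ne a b with h | h <;> simp_all)

lemma fentry_off (S : Matrix (Fin n) (Fin n) R) (p1 p2 a b : Fin n) (hne : p1 ≠ p2) :
    (Matrix.single (Sum.inl p1) (Sum.inr p2) (S p1 p2)
       + Matrix.single (Sum.inl p2) (Sum.inr p1) (S p1 p2) :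
       Matrix (Fin n ⊕ Fin n) (Fin n ⊕ Fin n) R) (Sum.inl a) (Sum.inr b)
        = (if (p1, p2) = (a, b) then S a b else 0)
          + (if (p1, p2) = (b, a) then (if b = a then 0 else S b a) else 0) := by
  simp only [Matrix.add_apply, Matrix.single, Matrix.of_apply, Sum.inl.injEq,
    Sum.inr.injEq, Prod.mk.injEq]
  by_cases h1 : p1 = a <;> by_cases h2 : p2 = b <;> by_cases h3 : p1 = b <;>
    by_cases h4 : p2 = a <;>
    simp only [h1, h2, h3, h4, if_true, if_false, true_and, false_and, and_true, and_false,
      if_neg, eq_self_iff_true] <;> subst_vars <;> simp_all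

lemma fentry_diag' (S : Matrix (Fin n) (Fin n) R) (p1 a b : Fin n) :
    (Matrix.single (Sum.inr p1) (Sum.inl p1) (S p1 p1) :
       Matrix (Fin n ⊕ Fin n) (Fin n ⊕ Fin n) R) (Sum.inr a) (Sum.inl b)
        = (if (p1, p1) = (a, b) then S a b else 0)
          + (if (p1, p1) = (b, a) then (if b = a then 0 else S b a) else 0) := by
  simp only [Matrix.single, Matrix.of_apply, Sum.inl.injEq, Sum.inr.injEq,
    Prod.mk.injEq]
  by_cases h1 : p1 = a <;> by_cases h2 : p1 = b <;> simp [h1, h2] <;>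
    (rcases eq_or_ne a b with h | h <;> simp_all)

lemma fentry_off' (S : Matrix (Fin n) (Fin n) R) (p1 p2 a b : Fin n) (hne : p1 ≠ p2) :
    (Matrix.single (Sum.inr p1) (Sum.inl p2) (S p1 p2)
       + Matrix.single (Sum.inr p2) (Sum.inl p1) (S p1 p2) :
       Matrix (Fin n ⊕ Fin n) (Fin n ⊕ Fin n) R) (Sum.inr a) (Sum.inl b)
        = (if (p1, p2) = (a, b) then S a b else 0)
          + (if (p1, p2) = (b, a) then (if b = a then 0 else S b a) else 0) := by
  simp only [Matrix.add_apply, Matrix.single, Matrix.of_apply, Sum.inl.injEq,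
    Sum.inr.injEq, Prod.mk.injEq]
  by_cases h1 : p1 = a <;> by_cases h2 : p2 = b <;> by_cases h3 : p1 = b <;>
    by_cases h4 : p2 = a <;>
    simp only [h1, h2, h3, h4, if_true, if_false, true_and, false_and, and_true, and_false,
      if_neg, eq_self_iff_true] <;> subst_vars <;> simp_all

lemma exists_upper_unit (S : Matrix (Fin n) (Fin n) R) (hS : Sᵀ = S) :
    ∃ u ∈ EpS R (Fin n) Set.univ,
      (u : Matrix (Fin n ⊕ Fin n) (Fin n ⊕ Fin n) R) = Matrix.fromBlocks 1 S 0 1 := by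
  classical
  set f : Fin n × Fin n → Matrix (Fin n ⊕ Fin n) (Fin n ⊕ Fin n) R := fun p =>
    if p.1 = p.2 then Matrix.single (Sum.inl p.1) (Sum.inr p.1) (S p.1 p.1)
    else Matrix.single (Sum.inl p.1) (Sum.inr p.2) (S p.1 p.2)
       + Matrix.single (Sum.inl p.2) (Sum.inr p.1) (S p.1 p.2) with hf
  have hzero : ∀ p q : Fin n × Fin n, f p * f q = 0 := by
    intro p q
    rw [hf]
    dsimp only
    split_ifs <;> simp [add_mul, mul_add, inlr_mul_zero]
  have hmem : ∀ p ∈ Finset.univ.filter (fun p : Fin n × Fin n => p.1 ≤ p.2),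
      ∃ u ∈ EpS R (Fin n) Set.univ,
        (u : Matrix (Fin n ⊕ Fin n) (Fin n ⊕ Fin n) R) = 1 + f p := by
    intro p _
    refine ⟨nilUnit (f p) (hzero p p), ?_, rfl⟩
    apply Subgroup.subset_closure
    show (nilUnit (f p) (hzero p p) : Matrix (Fin n ⊕ Fin n) (Fin n ⊕ Fin n) R)
      ∈ spGen R Set.univ
    rw [nilUnit_val, hf]
    dsimp only
    rcases eq_or_ne p.1 p.2 with he | he
    · rw [if_pos he]
      exact ⟨S p.1 p.1, Or.inl ⟨p.1, Set.mem_univ _, rfl⟩⟩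
    · rw [if_neg he]
      exact ⟨S p.1 p.2,
        Or.inr (Or.inr (Or.inr (Or.inl ⟨p.1, Set.mem_univ _, p.2, Set.mem_univ _, he, rfl⟩)))⟩
  obtain ⟨u, hu, hval⟩ := exists_unit_one_add_sum (EpS R (Fin n) Set.univ) _ f
      (fun p _ q _ => hzero p q) hmem
  refine ⟨u, hu, ?_⟩
  rw [hval, fromBlocks_upper]
  congr 1
  have fentry : ∀ (p : Fin n × Fin n) (a b : Fin n),
      f p (Sum.inl a) (Sum.inr b)
        = (if p = (a, b) then S a b else 0)
          + (if p = (b, a) then (if b = a then 0 else S b a) else 0) := by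
    intro p a b
    rcases p with ⟨p1, p2⟩
    rw [hf]
    dsimp only
    rcases eq_or_ne p1 p2 with rfl | hne
    · rw [if_pos rfl]
      exact fentry_diag S p1 a b
    · rw [if_neg hne]
      exact fentry_off S p1 p2 a b hne
  ext k l
  rw [Matrix.sum_apply]
  rcases k with a | a <;> rcases l with b | b
  · refine Eq.trans (Finset.sum_eq_zero fun p _ => ?_) (by simp)
    rw [hf]; dsimp only
    split_ifs <;> simp [Matrix.single]
  · rw [Finset.sum_congr rfl fun p _ => fentry p a b, Finset.sum_add_distrib]
    rw [Finset.sum_ite_eq' (Finset.univ.filter (fun p : Fin n × Fin n => p.1 ≤ p.2))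
        ((a, b) : Fin n × Fin n) (fun _ => S a b)]
    rw [Finset.sum_ite_eq' (Finset.univ.filter (fun p : Fin n × Fin n => p.1 ≤ p.2))
        ((b, a) : Fin n × Fin n) (fun _ => if b = a then 0 else S b a)]
    simp only [Finset.mem_filter, Finset.mem_univ, true_and]
    have hSab : S b a = S a b := by
      have := congrFun (congrFun hS a) b
      rw [Matrix.transpose_apply] at this
      exact this
    rcases lt_trichotomy a b with hab | rfl | hba
    · rw [if_pos (le_of_lt hab), if_neg (not_le.mpr hab)]
      simp [Matrix.fromBlocks]
    · rw [if_pos le_rfl, if_pos le_rfl, if_pos rfl]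
      simp [Matrix.fromBlocks]
    · rw [if_neg (not_le.mpr hba), if_pos (le_of_lt hba), if_neg (ne_of_lt hba)]
      simp [Matrix.fromBlocks, hSab]
  · refine Eq.trans (Finset.sum_eq_zero fun p _ => ?_) (by simp)
    rw [hf]; dsimp only
    split_ifs <;> simp [Matrix.single]
  · refine Eq.trans (Finset.sum_eq_zero fun p _ => ?_) (by simp)
    rw [hf]; dsimp only
    split_ifs <;> simp [Matrix.single]

lemma exists_lower_unit (S : Matrix (Fin n) (Fin n) R) (hS : Sᵀ = S) :
    ∃ u ∈ EpS R (Fin n) Set.univ,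
      (u : Matrix (Fin n ⊕ Fin n) (Fin n ⊕ Fin n) R) = Matrix.fromBlocks 1 0 S 1 := by
  classical
  set f : Fin n × Fin n → Matrix (Fin n ⊕ Fin n) (Fin n ⊕ Fin n) R := fun p =>
    if p.1 = p.2 then Matrix.single (Sum.inr p.1) (Sum.inl p.1) (S p.1 p.1)
    else Matrix.single (Sum.inr p.1) (Sum.inl p.2) (S p.1 p.2)
       + Matrix.single (Sum.inr p.2) (Sum.inl p.1) (S p.1 p.2) with hf
  have hzero : ∀ p q : Fin n × Fin n, f p * f q = 0 := by
    intro p q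
    rw [hf]
    dsimp only
    split_ifs <;> simp [add_mul, mul_add, inrl_mul_zero]
  have hmem : ∀ p ∈ Finset.univ.filter (fun p : Fin n × Fin n => p.1 ≤ p.2),
      ∃ u ∈ EpS R (Fin n) Set.univ,
        (u : Matrix (Fin n ⊕ Fin n) (Fin n ⊕ Fin n) R) = 1 + f p := by
    intro p _
    refine ⟨nilUnit (f p) (hzero p p), ?_, rfl⟩
    apply Subgroup.subset_closure
    show (nilUnit (f p) (hzero p p) : Matrix (Fin n ⊕ Fin n) (Fin n ⊕ Fin n) R)
      ∈ spGen R Set.univ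
    rw [nilUnit_val, hf]
    dsimp only
    rcases eq_or_ne p.1 p.2 with he | he
    · rw [if_pos he]
      exact ⟨S p.1 p.1, Or.inr (Or.inl ⟨p.1, Set.mem_univ _, rfl⟩)⟩
    · rw [if_neg he]
      exact ⟨S p.1 p.2,
        Or.inr (Or.inr (Or.inr (Or.inr ⟨p.1, Set.mem_univ _, p.2, Set.mem_univ _, he, rfl⟩)))⟩
  obtain ⟨u, hu, hval⟩ := exists_unit_one_add_sum (EpS R (Fin n) Set.univ) _ f
      (fun p _ q _ => hzero p q) hmem
  refine ⟨u, hu, ?_⟩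
  rw [hval, fromBlocks_lower]
  congr 1
  have fentry : ∀ (p : Fin n × Fin n) (a b : Fin n),
      f p (Sum.inr a) (Sum.inl b)
        = (if p = (a, b) then S a b else 0)
          + (if p = (b, a) then (if b = a then 0 else S b a) else 0) := by
    intro p a b
    rcases p with ⟨p1, p2⟩
    rw [hf]
    dsimp only
    rcases eq_or_ne p1 p2 with rfl | hne
    · rw [if_pos rfl]
      exact fentry_diag' S p1 a b
    · rw [if_neg hne]
      exact fentry_off' S p1 p2 a b hne
  ext k l
  rw [Matrix.sum_apply]
  rcases k with a | a <;> rcases l with b | b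
  · refine Eq.trans (Finset.sum_eq_zero fun p _ => ?_) (by simp)
    rw [hf]; dsimp only
    split_ifs <;> simp [Matrix.single]
  · refine Eq.trans (Finset.sum_eq_zero fun p _ => ?_) (by simp)
    rw [hf]; dsimp only
    split_ifs <;> simp [Matrix.single]
  · rw [Finset.sum_congr rfl fun p _ => fentry p a b, Finset.sum_add_distrib]
    rw [Finset.sum_ite_eq' (Finset.univ.filter (fun p : Fin n × Fin n => p.1 ≤ p.2))
        ((a, b) : Fin n × Fin n) (fun _ => S a b)]
    rw [Finset.sum_ite_eq' (Finset.univ.filter (fun p : Fin n × Fin n => p.1 ≤ p.2))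
        ((b, a) : Fin n × Fin n) (fun _ => if b = a then 0 else S b a)]
    simp only [Finset.mem_filter, Finset.mem_univ, true_and]
    have hSab : S b a = S a b := by
      have := congrFun (congrFun hS a) b
      rw [Matrix.transpose_apply] at this
      exact this
    rcases lt_trichotomy a b with hab | rfl | hba
    · rw [if_pos (le_of_lt hab), if_neg (not_le.mpr hab)]
      simp [Matrix.fromBlocks]
    · rw [if_pos le_rfl, if_pos le_rfl, if_pos rfl]
      simp [Matrix.fromBlocks]
    · rw [if_neg (not_le.mpr hba), if_pos (le_of_lt hba), if_neg (ne_of_lt hba)]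
      simp [Matrix.fromBlocks, hSab]
  · refine Eq.trans (Finset.sum_eq_zero fun p _ => ?_) (by simp)
    rw [hf]; dsimp only
    split_ifs <;> simp [Matrix.single]

lemma Hyp_mul {ι : Type*} [Fintype ι] [DecidableEq ι] (g h : (Matrix ι ι R)ˣ) :
    Hyp R (g * h) = Hyp R g * Hyp R h := by
  apply Units.ext
  show Matrix.fromBlocks (g * h).val 0 0 ((g * h).invᵀ)
    = Matrix.fromBlocks g.val 0 0 g.invᵀ * Matrix.fromBlocks h.val 0 0 h.invᵀ
  rw [Matrix.fromBlocks_multiply]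
  have h1 : (g * h).val = g.val * h.val := rfl
  have h2 : (g * h).inv = h.inv * g.inv := rfl
  rw [h1, h2, Matrix.transpose_mul]
  simp

lemma Hyp_one {ι : Type*} [Fintype ι] [DecidableEq ι] :
    Hyp R (1 : (Matrix ι ι R)ˣ) = 1 := by
  apply Units.ext
  show Matrix.fromBlocks (1 : (Matrix ι ι R)ˣ).val 0 0 ((1 : (Matrix ι ι R)ˣ).invᵀ) = 1
  have h1 : (1 : (Matrix ι ι R)ˣ).val = 1 := rfl
  have h2 : (1 : (Matrix ι ι R)ˣ).inv = 1 := rfl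
  rw [h1, h2, Matrix.transpose_one, Matrix.fromBlocks_one]

lemma Hyp_mem (h : (Matrix (Fin n) (Fin n) R)ˣ) (hh : h ∈ Esubgroup R (Fin n)) :
    Hyp R h ∈ EpS R (Fin n) Set.univ := by
  induction hh using Subgroup.closure_induction with
  | mem w hw =>
    obtain ⟨i, j, hij, t, hval⟩ := hw
    apply Subgroup.subset_closure
    show ((Hyp R w : (Matrix (Fin n ⊕ Fin n) (Fin n ⊕ Fin n) R)ˣ) :
      Matrix (Fin n ⊕ Fin n) (Fin n ⊕ Fin n) R) ∈ spGen R Set.univ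
    have hsq : Matrix.single i j t * Matrix.single i j t
        = (0 : Matrix (Fin n) (Fin n) R) :=
      Matrix.single_mul_single_of_ne _ _ _ _ (Ne.symm hij) _
    have hinv : w.inv = 1 - Matrix.single i j t := by
      have h1 : (w : Matrix (Fin n) (Fin n) R) * (1 - Matrix.single i j t) = 1 := by
        rw [hval]
        have : (1 + Matrix.single i j t) * (1 - Matrix.single i j t)
            = 1 + (Matrix.single i j t * Matrix.single i j t) * (-1) := by
          noncomm_ring
        rw [this, hsq]
        simp
      exact Units.inv_eq_of_mul_eq_one_right h1
    have hvv : ((Hyp R w : (Matrix (Fin n ⊕ Fin n) (Fin n ⊕ Fin n) R)ˣ) :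
        Matrix (Fin n ⊕ Fin n) (Fin n ⊕ Fin n) R)
        = 1 + (Matrix.single (Sum.inl i) (Sum.inl j) t
             - Matrix.single (Sum.inr j) (Sum.inr i) t) := by
      show Matrix.fromBlocks w.val 0 0 w.invᵀ = _
      rw [hval, hinv]
      ext k l
      rcases k with a | a <;> rcases l with b | b <;>
        simp [Matrix.single, Matrix.one_apply, Matrix.transpose_apply] <;>
        split_ifs <;> simp_all
    rw [hvv]
    exact ⟨t, Or.inr (Or.inr (Or.inl ⟨i, Set.mem_univ _, j, Set.mem_univ _, hij, rfl⟩))⟩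
  | one =>
    rw [Hyp_one]
    exact Subgroup.one_mem _
  | mul a b _ _ iha ihb =>
    rw [Hyp_mul]
    exact Subgroup.mul_mem _ iha ihb
  | inv a _ iha =>
    have : Hyp R a⁻¹ = (Hyp R a)⁻¹ := by
      apply eq_inv_of_mul_eq_one_left
      rw [← Hyp_mul, inv_mul_cancel, Hyp_one]
    rw [this]
    exact Subgroup.inv_mem _ iha


end SympHelpers


section MainHelpers

variable {R : Type*} [CommRing R] {n : ℕ}

lemma upper_mem_Upos (S : Matrix (Fin n) (Fin n) R) (hS : Sᵀ = S) :
    (Matrix.fromBlocks (1 : Matrix (Fin n) (Fin n) R) S 0 1) ∈ Upos R n := by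
  refine ⟨?_, ?_, ?_, ?_⟩
  · show (Matrix.fromBlocks (1 : Matrix (Fin n) (Fin n) R) S 0 1)ᵀ * Jmat R (Fin n) *
      Matrix.fromBlocks (1 : Matrix (Fin n) (Fin n) R) S 0 1 = Jmat R (Fin n)
    show (Matrix.fromBlocks (1 : Matrix (Fin n) (Fin n) R) S 0 1)ᵀ *
      Matrix.fromBlocks 0 1 (-1) 0 *
      Matrix.fromBlocks (1 : Matrix (Fin n) (Fin n) R) S 0 1 = Matrix.fromBlocks 0 1 (-1) 0
    rw [Matrix.fromBlocks_transpose, Matrix.fromBlocks_multiply, Matrix.fromBlocks_multiply]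
    simp [hS]
  · intro i j
    simp
  · intro i j hji
    simp only [Matrix.fromBlocks_apply₁₁]
    exact Matrix.one_apply_ne (ne_of_gt hji)
  · intro i
    simp [Matrix.one_apply]

lemma lower_mem_Uneg (Q : Matrix (Fin n) (Fin n) R) (hQ : Qᵀ = Q) :
    (Matrix.fromBlocks (1 : Matrix (Fin n) (Fin n) R) 0 Q 1) ∈ Uneg R n := by
  refine ⟨?_, ?_, ?_, ?_⟩
  · show (Matrix.fromBlocks (1 : Matrix (Fin n) (Fin n) R) 0 Q 1)ᵀ * Jmat R (Fin n) *
      Matrix.fromBlocks (1 : Matrix (Fin n) (Fin n) R) 0 Q 1 = Jmat R (Fin n)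
    show (Matrix.fromBlocks (1 : Matrix (Fin n) (Fin n) R) 0 Q 1)ᵀ *
      Matrix.fromBlocks 0 1 (-1) 0 *
      Matrix.fromBlocks (1 : Matrix (Fin n) (Fin n) R) 0 Q 1 = Matrix.fromBlocks 0 1 (-1) 0
    rw [Matrix.fromBlocks_transpose, Matrix.fromBlocks_multiply, Matrix.fromBlocks_multiply]
    simp [hQ]
  · intro i j
    simp
  · intro i j hij
    simp only [Matrix.fromBlocks_apply₁₁]
    exact Matrix.one_apply_ne (ne_of_lt hij)
  · intro i
    simp [Matrix.one_apply]

end MainHelpers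


/-- Proposition 3.1, case `Φ = C_l`, in the symplectic group;
`l = m + 1 ≥ 3`, `sr(R) ≤ l - 1 = m`. Every `g ∈ Ep(2l, R)` factors as
`g = u · v · H(h) · q` with `u ∈ U(2l,R)`, `v ∈ U⁻(2l,R)`, `h ∈ E(l,R)` and
`q ∈ Ep(2l, R)` fixing `e₁`. -/
theorem statement8 (R : Type*) [CommRing R] (m : ℕ) (hm : 2 ≤ m) (hsr : SRleq R m)
    (g : (Matrix (Fin (m + 1) ⊕ Fin (m + 1)) (Fin (m + 1) ⊕ Fin (m + 1)) R)ˣ)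
    (hg : g ∈ EpS R (Fin (m + 1)) Set.univ) :
    ∃ (u v q : (Matrix (Fin (m + 1) ⊕ Fin (m + 1)) (Fin (m + 1) ⊕ Fin (m + 1)) R)ˣ)
      (h : (Matrix (Fin (m + 1)) (Fin (m + 1)) R)ˣ),
      u.val ∈ Upos R (m + 1) ∧ v.val ∈ Uneg R (m + 1) ∧
      h ∈ Esubgroup R (Fin (m + 1)) ∧ q ∈ EpS R (Fin (m + 1)) Set.univ ∧
      q.val.mulVec (Pi.single (Sum.inl 0) 1) = Pi.single (Sum.inl 0) (1 : R) ∧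
      g = u * v * Hyp R h * q := by
  classical
  set e : (Fin (m + 1) ⊕ Fin (m + 1)) → R := Pi.single (Sum.inl 0) 1 with he
  set c : Fin (m + 1) → R :=
    fun i => (g : Matrix (Fin (m + 1) ⊕ Fin (m + 1)) (Fin (m + 1) ⊕ Fin (m + 1)) R)
      (Sum.inl i) (Sum.inl 0) with hc
  set d : Fin (m + 1) → R :=
    fun i => (g : Matrix (Fin (m + 1) ⊕ Fin (m + 1)) (Fin (m + 1) ⊕ Fin (m + 1)) R)
      (Sum.inr i) (Sum.inl 0) with hd
  set x : Fin (m + 1) → R :=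
    fun i => ((g⁻¹ : (Matrix (Fin (m + 1) ⊕ Fin (m + 1)) (Fin (m + 1) ⊕ Fin (m + 1)) R)ˣ) :
      Matrix (Fin (m + 1) ⊕ Fin (m + 1)) (Fin (m + 1) ⊕ Fin (m + 1)) R)
      (Sum.inl 0) (Sum.inl i) with hx
  set p : Fin (m + 1) → R :=
    fun i => ((g⁻¹ : (Matrix (Fin (m + 1) ⊕ Fin (m + 1)) (Fin (m + 1) ⊕ Fin (m + 1)) R)ˣ) :
      Matrix (Fin (m + 1) ⊕ Fin (m + 1)) (Fin (m + 1) ⊕ Fin (m + 1)) R)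
      (Sum.inl 0) (Sum.inr i) with hp
  have hcombo : ∑ i, x i * c i + ∑ i, p i * d i = 1 := by
    have h1 : ((g⁻¹ : (Matrix (Fin (m + 1) ⊕ Fin (m + 1)) (Fin (m + 1) ⊕ Fin (m + 1)) R)ˣ) :
        Matrix (Fin (m + 1) ⊕ Fin (m + 1)) (Fin (m + 1) ⊕ Fin (m + 1)) R) *
        (g : Matrix (Fin (m + 1) ⊕ Fin (m + 1)) (Fin (m + 1) ⊕ Fin (m + 1)) R) = 1 :=
      Units.inv_mul g
    have h2 := congrFun (congrFun h1 (Sum.inl 0)) (Sum.inl 0)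
    rw [Matrix.mul_apply, Fintype.sum_sum_type] at h2
    simpa [Matrix.one_apply, hx, hp, hc, hd] using h2
  set α : R := ∑ i, p i * d i with hα
  have hsnoc : Unimodular R (Fin.snoc c (α * α) : Fin (m + 2) → R) := by
    rw [unimodular_iff]
    refine ⟨Fin.snoc (fun i => x i * (∑ k, x k * c k + 2 * α)) 1, ?_⟩
    rw [Fin.sum_univ_castSucc]
    simp only [Fin.snoc_castSucc, Fin.snoc_last, one_mul]
    have hterm : ∀ i : Fin (m + 1), x i * (∑ k, x k * c k + 2 * α) * c i
        = x i * c i * (∑ k, x k * c k + 2 * α) := by intro i; ring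
    rw [Finset.sum_congr rfl fun i _ => hterm i, ← Finset.sum_mul]
    have hX : (∑ k, x k * c k) + α = 1 := hcombo
    linear_combination ((∑ k, x k * c k) + α + 1) * hX
  obtain ⟨b, hb⟩ := hsr (m + 1) (Nat.le_succ m) _ hsnoc
  have hb' : Unimodular R (fun i : Fin (m + 1) => c i + b i * (α * α)) := by
    have : (fun i : Fin (m + 1) =>
        (Fin.snoc c (α * α) : Fin (m + 2) → R) i.castSucc
          + b i * (Fin.snoc c (α * α) : Fin (m + 2) → R) (Fin.last (m + 1)))
        = fun i : Fin (m + 1) => c i + b i * (α * α) := by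
      funext i
      rw [Fin.snoc_castSucc, Fin.snoc_last]
    rw [← this]
    exact hb
  set β : R := ∑ k, b k * d k with hβ
  set S : Matrix (Fin (m + 1)) (Fin (m + 1)) R :=
    Matrix.of (fun i j => α * (b i * p j + p i * b j) - β * (p i * p j)) with hSdef
  have hS : Sᵀ = S := by
    ext i j
    rw [Matrix.transpose_apply, hSdef]
    simp only [Matrix.of_apply]
    ring
  have hSd : S.mulVec d = fun i => α * α * b i := by
    funext i
    show ∑ j, S i j * d j = α * α * b i
    have hterm : ∀ j, S i j * d j = (α * b i) * (p j * d j) + (α * p i) * (b j * d j)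
        - (β * p i) * (p j * d j) := by
      intro j
      rw [hSdef]
      simp only [Matrix.of_apply]
      ring
    rw [Finset.sum_congr rfl fun j _ => hterm j, Finset.sum_sub_distrib,
      Finset.sum_add_distrib, ← Finset.mul_sum, ← Finset.mul_sum, ← Finset.mul_sum,
      ← hα, ← hβ]
    ring
  set c' : Fin (m + 1) → R := fun i => c i + b i * (α * α) with hc'
  obtain ⟨h, hhE, hhcol⟩ := exists_E_col hm hsr c' hb'
  obtain ⟨x', hx'⟩ := (unimodular_iff _).mp hb'
  set γ : R := ∑ k, d k * c' k with hγ
  set Q : Matrix (Fin (m + 1)) (Fin (m + 1)) R :=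
    Matrix.of (fun i j => d i * x' j + x' i * d j - γ * (x' i * x' j)) with hQdef
  have hQ : Qᵀ = Q := by
    ext i j
    rw [Matrix.transpose_apply, hQdef]
    simp only [Matrix.of_apply]
    ring
  have hx'' : ∑ j, x' j * c' j = 1 := hx'
  have hQc : Q.mulVec c' = d := by
    funext i
    show ∑ j, Q i j * c' j = d i
    have hterm : ∀ j, Q i j * c' j = (d i) * (x' j * c' j) + (x' i) * (d j * c' j)
        - (γ * x' i) * (x' j * c' j) := by
      intro j
      rw [hQdef]
      simp only [Matrix.of_apply]
      ring
    rw [Finset.sum_congr rfl fun j _ => hterm j, Finset.sum_sub_distrib,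
      Finset.sum_add_distrib, ← Finset.mul_sum, ← Finset.mul_sum, ← Finset.mul_sum,
      hx'', ← hγ]
    ring
  obtain ⟨u, huE, huval⟩ := exists_upper_unit (-S) (by rw [Matrix.transpose_neg, hS])
  obtain ⟨v, hvE, hvval⟩ := exists_lower_unit Q hQ
  have hHmem : Hyp R h ∈ EpS R (Fin (m + 1)) Set.univ := Hyp_mem h hhE
  -- key mulVec computations
  have hecl : e ∘ Sum.inl = Pi.single (0 : Fin (m + 1)) (1 : R) := by
    funext i
    rw [he]
    simp [Pi.single_apply]
  have hecr : e ∘ Sum.inr = (0 : Fin (m + 1) → R) := by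
    funext i
    rw [he]
    simp [Pi.single_apply]
  have hH : ((Hyp R h : (Matrix (Fin (m + 1) ⊕ Fin (m + 1)) (Fin (m + 1) ⊕ Fin (m + 1)) R)ˣ) :
      Matrix (Fin (m + 1) ⊕ Fin (m + 1)) (Fin (m + 1) ⊕ Fin (m + 1)) R).mulVec e
      = Sum.elim c' 0 := by
    show (Matrix.fromBlocks h.val 0 0 h.invᵀ).mulVec e = Sum.elim c' 0
    rw [Matrix.fromBlocks_mulVec, hecl, hecr]
    rw [hhcol]
    simp only [Matrix.zero_mulVec, Matrix.mulVec_zero, add_zero, zero_add]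
  have hV : (v : Matrix (Fin (m + 1) ⊕ Fin (m + 1)) (Fin (m + 1) ⊕ Fin (m + 1)) R).mulVec
      (Sum.elim c' 0) = Sum.elim c' d := by
    rw [hvval, Matrix.fromBlocks_mulVec]
    have h1 : Sum.elim c' (0 : Fin (m + 1) → R) ∘ Sum.inl = c' := rfl
    have h2 : Sum.elim c' (0 : Fin (m + 1) → R) ∘ Sum.inr = (0 : Fin (m + 1) → R) := rfl
    rw [h1, h2, hQc]
    simp
  have hU : (u : Matrix (Fin (m + 1) ⊕ Fin (m + 1)) (Fin (m + 1) ⊕ Fin (m + 1)) R).mulVec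
      (Sum.elim c' d) = Sum.elim c d := by
    rw [huval, Matrix.fromBlocks_mulVec]
    have h1 : Sum.elim c' d ∘ Sum.inl = c' := rfl
    have h2 : Sum.elim c' d ∘ Sum.inr = d := rfl
    rw [h1, h2]
    have htop : (1 : Matrix (Fin (m + 1)) (Fin (m + 1)) R).mulVec c' + (-S).mulVec d = c := by
      funext i
      rw [Matrix.one_mulVec, Matrix.neg_mulVec]
      simp only [Pi.add_apply, Pi.neg_apply, hSd]
      rw [hc']
      ring
    rw [htop]
    simp
  have haeq : (g : Matrix (Fin (m + 1) ⊕ Fin (m + 1)) (Fin (m + 1) ⊕ Fin (m + 1)) R).mulVec e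
      = Sum.elim c d := by
    funext k
    rw [he]
    rcases k with i | i
    · simp [hc]
    · simp [hd]
  have key : ((u * v * Hyp R h :
      (Matrix (Fin (m + 1) ⊕ Fin (m + 1)) (Fin (m + 1) ⊕ Fin (m + 1)) R)ˣ) :
      Matrix (Fin (m + 1) ⊕ Fin (m + 1)) (Fin (m + 1) ⊕ Fin (m + 1)) R).mulVec e
      = (g : Matrix (Fin (m + 1) ⊕ Fin (m + 1)) (Fin (m + 1) ⊕ Fin (m + 1)) R).mulVec e := by
    rw [Units.val_mul, Units.val_mul, ← Matrix.mulVec_mulVec, ← Matrix.mulVec_mulVec,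
      hH, hV, hU, haeq]
  refine ⟨u, v, (u * v * Hyp R h)⁻¹ * g, h, ?_, ?_, hhE, ?_, ?_, ?_⟩
  · rw [huval]
    exact upper_mem_Upos (-S) (by rw [Matrix.transpose_neg, hS])
  · rw [hvval]
    exact lower_mem_Uneg Q hQ
  · exact Subgroup.mul_mem _
      (Subgroup.inv_mem _
        (Subgroup.mul_mem _ (Subgroup.mul_mem _ huE hvE) hHmem)) hg
  · show (((u * v * Hyp R h)⁻¹ * g :
      (Matrix (Fin (m + 1) ⊕ Fin (m + 1)) (Fin (m + 1) ⊕ Fin (m + 1)) R)ˣ) :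
      Matrix (Fin (m + 1) ⊕ Fin (m + 1)) (Fin (m + 1) ⊕ Fin (m + 1)) R).mulVec e = e
    rw [Units.val_mul, ← Matrix.mulVec_mulVec, ← key, Matrix.mulVec_mulVec,
      Units.inv_mul, Matrix.one_mulVec]
  · exact (mul_inv_cancel_left _ _).symm
end
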